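/- Let Ω = (0,1)×(0,1), 1 < p < ∞, 0 < α < 1, and W(x,y) = diag(1, x^{-α} y^{-α}). Then the function f(x,y) = c x^{(α-1)/p + 1} satisfies ∫_Ω |W^{1/p} ∇f|^p dx dy = 1/α < ∞, while ∫_Ω |∇f|^p |W|_op dx dy = ∞; hence f ∈ W^{1,p}_W(Ω) but f ∉ W^{1,p}(v,Ω) with v = |W|_op. -/

import Mathlib

open MeasureTheory Matrix

noncomputable def opNorm {d : ℕ} (A : Matrix (Fin d) (Fin d) ℝ) : ℝ :=
  ‖Matrix.toEuclideanCLM (𝕜 := ℝ) (n := Fin d) A‖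

noncomputable def vnorm {d : ℕ} (v : Fin d → ℝ) : ℝ := Real.sqrt (∑ i, v i ^ 2)

/-- The real power `A^s` of a symmetric matrix, via diagonalization. -/
noncomputable def matRPow {d : ℕ} (A : Matrix (Fin d) (Fin d) ℝ) (s : ℝ) :
    Matrix (Fin d) (Fin d) ℝ :=
  if h : A.IsHermitian then
    (Matrix.IsHermitian.eigenvectorUnitary h : Matrix (Fin d) (Fin d) ℝ) *
      Matrix.diagonal (fun i => h.eigenvalues i ^ s) *
      star (Matrix.IsHermitian.eigenvectorUnitary h : Matrix (Fin d) (Fin d) ℝ)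
  else A

/-!
`∇f = (x^{(α-1)/p}, 0)` is an eigenvector of `W` for the eigenvalue `1`, hence it is fixed
by `W^{1/p}` and `|W^{1/p} ∇f|^p = x^{α-1}`. On the other hand `|W|_op = x^{-α} y^{-α}` on
`Ω`, so `|∇f|^p |W|_op = x^{-1} y^{-α}` and `|f|^p |W|_op = c^p x^{p-1} y^{-α}`. All integrands
are thus of the form `x^a y^b`, which by Fubini is integrable on the unit square iff
`a, b > -1`.
-/

open Set

lemma Matrix.IsHermitian.matRPow_mulVec_of_mulVec_eq_smul {d : ℕ} {A : Matrix (Fin d) (Fin d) ℝ}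
    (hA : A.IsHermitian) {v : Fin d → ℝ} {μ : ℝ} (hv : A *ᵥ v = μ • v) (s : ℝ) :
    matRPow A s *ᵥ v = μ ^ s • v := by
  set U : Matrix (Fin d) (Fin d) ℝ := (hA.eigenvectorUnitary : Matrix (Fin d) (Fin d) ℝ)
  have hU : U * star U = 1 := mem_unitaryGroup_iff.mp hA.eigenvectorUnitary.2
  set w := star U *ᵥ v
  have hdiag : star U * A * U = diagonal hA.eigenvalues := by
    simpa [Function.comp_def] using hA.conjStarAlgAut_star_eigenvectorUnitary
  have hw : diagonal hA.eigenvalues *ᵥ w = μ • w := by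
    rw [← hdiag, mulVec_mulVec, mul_assoc, mul_assoc, hU, mul_one,
      ← mulVec_mulVec, hv, mulVec_smul]
  have hws : diagonal (fun i => hA.eigenvalues i ^ s) *ᵥ w = μ ^ s • w := by
    funext i
    have hi := congrFun hw i
    simp only [mulVec_diagonal, Pi.smul_apply, smul_eq_mul] at hi ⊢
    rcases eq_or_ne (w i) 0 with h | h
    · simp [h]
    · rw [mul_right_cancel₀ h hi]
  rw [matRPow, dif_pos hA, ← mulVec_mulVec, ← mulVec_mulVec, hws, mulVec_smul, mulVec_mulVec,
    hU, one_mulVec]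

lemma Matrix.of_diag_two_eq_diagonal (a b : ℝ) :
    Matrix.of ![![a, 0], ![0, b]] = diagonal ![a, b] := by
  ext i j
  fin_cases i <;> fin_cases j <;> rfl

lemma matRPow_diag_one_mulVec_pair (t a s : ℝ) :
    matRPow (Matrix.of ![![1, 0], ![0, t]]) s *ᵥ ![a, 0] = ![a, 0] := by
  have hfix : Matrix.of ![![1, 0], ![0, t]] *ᵥ ![a, 0] = (1 : ℝ) • ![a, 0] := by
    rw [Matrix.of_diag_two_eq_diagonal, one_smul]
    funext i
    fin_cases i <;> simp [mulVec_diagonal]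
  have hA : (Matrix.of ![![1, 0], ![0, t]]).IsHermitian :=
    Matrix.of_diag_two_eq_diagonal 1 t ▸ isHermitian_diagonal _
  rw [hA.matRPow_mulVec_of_mulVec_eq_smul hfix, Real.one_rpow, one_smul]

open scoped Matrix.Norms.L2Operator in
lemma opNorm_diagonal {d : ℕ} (v : Fin d → ℝ) : opNorm (diagonal v) = ‖v‖ :=
  l2_opNorm_diagonal v

lemma opNorm_diag_one_of_one_le {t : ℝ} (ht : 1 ≤ t) :
    opNorm (Matrix.of ![![1, 0], ![0, t]]) = t := by
  have ht0 : 0 ≤ t := zero_le_one.trans ht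
  rw [Matrix.of_diag_two_eq_diagonal, opNorm_diagonal]
  refine le_antisymm ((pi_norm_le_iff_of_nonneg ht0).2 fun i => ?_) ?_
  · fin_cases i <;> simp [abs_of_nonneg ht0, ht]
  · simpa [abs_of_nonneg ht0] using norm_le_pi_norm ![1, t] 1

lemma vnorm_pair (a : ℝ) : vnorm ![a, 0] = |a| := by
  simp [vnorm, Fin.sum_univ_two, Real.sqrt_sq_eq_abs]

lemma hasDerivAt_rpow_add_one_div {e x : ℝ} (he : e + 1 ≠ 0) (hx : 0 < x) :
    HasDerivAt (fun x : ℝ => 1 / (e + 1) * x ^ (e + 1)) (x ^ e) x := by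
  have := (Real.hasDerivAt_rpow_const (p := e + 1) (Or.inl hx.ne')).const_mul (1 / (e + 1))
  rwa [add_sub_cancel_right, ← mul_assoc, one_div_mul_cancel he, one_mul] at this

lemma one_le_rpow_neg_mul_rpow_neg {x y α : ℝ} (hα : 0 ≤ α) (hx : x ∈ Ioc 0 1)
    (hy : y ∈ Ioc 0 1) : 1 ≤ x ^ (-α) * y ^ (-α) :=
  one_le_mul_of_one_le_of_one_le
    (Real.one_le_rpow_of_pos_of_le_one_of_nonpos hx.1 hx.2 (neg_nonpos.2 hα))
    (Real.one_le_rpow_of_pos_of_le_one_of_nonpos hy.1 hy.2 (neg_nonpos.2 hα))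

lemma rpow_rpow_mul_rpow_neg {x : ℝ} (hx : 0 < x) (a p b : ℝ) :
    (x ^ a) ^ p * x ^ (-b) = x ^ (a * p - b) := by
  rw [← Real.rpow_mul hx.le, ← Real.rpow_add hx, sub_eq_add_neg]

lemma integral_Ioo_zero_one_rpow {a : ℝ} (ha : -1 < a) :
    ∫ x in Ioo 0 1, x ^ a = 1 / (a + 1) := by
  rw [← integral_Ioc_eq_integral_Ioo, ← intervalIntegral.integral_of_le zero_le_one,
    integral_rpow (Or.inl ha), Real.one_rpow, Real.zero_rpow (by linarith), sub_zero]

lemma integrableOn_unitSquare_rpow_mul_rpow_iff {a b : ℝ} :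
    IntegrableOn (fun z : ℝ × ℝ => z.1 ^ a * z.2 ^ b) (Ioo 0 1 ×ˢ Ioo 0 1) ↔
      -1 < a ∧ -1 < b := by
  have h1d (r : ℝ) : IntegrableOn (fun x : ℝ => x ^ r) (Ioo 0 1) ↔ -1 < r :=
    intervalIntegral.integrableOn_Ioo_rpow_iff zero_lt_one
  have : (ae (volume.restrict (Ioo (0 : ℝ) 1))).NeBot := ae_restrict_neBot.2 (by simp)
  rw [IntegrableOn, Measure.volume_eq_prod, ← Measure.prod_restrict]
  refine ⟨fun h => ⟨?_, ?_⟩, fun ⟨ha, hb⟩ => ((h1d a).2 ha).mul_prod ((h1d b).2 hb)⟩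
  · obtain ⟨y, hy, hint⟩ := ((ae_restrict_mem measurableSet_Ioo).and h.prod_left_ae).exists
    exact (h1d a).1 ((integrable_mul_const_iff (Real.rpow_pos_of_pos hy.1 b).ne'.isUnit _).1 hint)
  · obtain ⟨x, hx, hint⟩ := ((ae_restrict_mem measurableSet_Ioo).and h.prod_right_ae).exists
    exact (h1d b).1 ((integrable_const_mul_iff (Real.rpow_pos_of_pos hx.1 a).ne'.isUnit _).1 hint)

lemma integral_unitSquare_rpow_mul_rpow {a b : ℝ} (ha : -1 < a) (hb : -1 < b) :
    ∫ z in Ioo 0 1 ×ˢ Ioo 0 1, z.1 ^ a * z.2 ^ b = 1 / ((a + 1) * (b + 1)) := by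
  rw [Measure.volume_eq_prod, setIntegral_prod_mul (fun x : ℝ => x ^ a) (fun y : ℝ => y ^ b),
    integral_Ioo_zero_one_rpow ha, integral_Ioo_zero_one_rpow hb, one_div_mul_one_div]

/-- Example 5.1: on `Ω = (0,1)²` with `W = diag(1, x^{-α} y^{-α})` and
`f(x,y) = c x^{(α-1)/p + 1}` (so `∇f = (x^{(α-1)/p}, 0)`), one has
`∫_Ω |W^{1/p} ∇f|^p = 1/α < ∞` while `∫_Ω |∇f|^p |W|_op = ∞`; moreover
`f ∈ L^p(v, Ω)`. Hence `f ∈ W^{1,p}_W(Ω)` but `f ∉ W^{1,p}(v, Ω)`. -/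
theorem example_inclusion_proper (p α : ℝ) (hp : 1 < p) (hα0 : 0 < α) (hα1 : α < 1) :
    let Ω : Set (ℝ × ℝ) := Set.Ioo (0:ℝ) 1 ×ˢ Set.Ioo (0:ℝ) 1
    let W : ℝ × ℝ → Matrix (Fin 2) (Fin 2) ℝ :=
      fun z => Matrix.of ![![1, 0], ![0, z.1 ^ (-α) * z.2 ^ (-α)]]
    let e : ℝ := (α - 1) / p
    let f : ℝ × ℝ → ℝ := fun z => (1 / (e + 1)) * z.1 ^ (e + 1)
    let g : ℝ × ℝ → Fin 2 → ℝ := fun z => ![z.1 ^ e, 0]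
    (∀ z ∈ Ω, HasFDerivAt f ((z.1 ^ e) • ContinuousLinearMap.fst ℝ ℝ ℝ) z) ∧
    (∫ z in Ω, vnorm (matRPow (W z) (1 / p) *ᵥ g z) ^ p) = 1 / α ∧
    IntegrableOn (fun z => vnorm (matRPow (W z) (1 / p) *ᵥ g z) ^ p) Ω volume ∧
    ¬ IntegrableOn (fun z => vnorm (g z) ^ p * opNorm (W z)) Ω volume ∧
    IntegrableOn (fun z => |f z| ^ p * opNorm (W z)) Ω volume := by
  intro Ω W e f g
  have hΩ : MeasurableSet Ω := measurableSet_Ioo.prod measurableSet_Ioo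
  have hp0 : 0 < p := by linarith
  have hep : e * p = α - 1 := div_mul_cancel₀ _ hp0.ne'
  have he : 0 < e + 1 := by
    have : -1 < e := by rw [lt_div_iff₀ hp0]; linarith
    linarith
  have hW : ∀ z ∈ Ω, opNorm (W z) = z.1 ^ (-α) * z.2 ^ (-α) := fun z hz =>
    opNorm_diag_one_of_one_le <|
      one_le_rpow_neg_mul_rpow_neg hα0.le (Ioo_subset_Ioc_self hz.1) (Ioo_subset_Ioc_self hz.2)
  have hg : ∀ z ∈ Ω, vnorm (g z) ^ p = (z.1 ^ e) ^ p := fun z hz => by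
    rw [vnorm_pair, abs_of_nonneg (Real.rpow_nonneg hz.1.1.le _)]
  have hWg : EqOn (fun z => vnorm (matRPow (W z) (1 / p) *ᵥ g z) ^ p)
      (fun z => z.1 ^ (α - 1) * z.2 ^ (0 : ℝ)) Ω := fun z hz => by
    simp only [W, g, matRPow_diag_one_mulVec_pair, hg z hz, ← Real.rpow_mul hz.1.1.le, hep,
      Real.rpow_zero, mul_one]
  refine ⟨fun z hz => (hasDerivAt_rpow_add_one_div he.ne' hz.1.1).comp_hasFDerivAt z
    hasFDerivAt_fst, ?_, ?_, ?_, ?_⟩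
  · rw [setIntegral_congr_fun hΩ hWg,
      integral_unitSquare_rpow_mul_rpow (by linarith) (by norm_num)]
    ring_nf
  · exact (integrableOn_unitSquare_rpow_mul_rpow_iff.2 ⟨by linarith, by norm_num⟩).congr_fun
      hWg.symm hΩ
  · have hv : EqOn (fun z => vnorm (g z) ^ p * opNorm (W z))
        (fun z => z.1 ^ (-1 : ℝ) * z.2 ^ (-α)) Ω := fun z hz => by
      dsimp only
      rw [hg z hz, hW z hz, ← mul_assoc, rpow_rpow_mul_rpow_neg hz.1.1, hep, sub_sub_cancel_left]
    rw [integrableOn_congr_fun hv hΩ, integrableOn_unitSquare_rpow_mul_rpow_iff]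
    exact fun h => lt_irrefl _ h.1
  · have hv : EqOn (fun z => |f z| ^ p * opNorm (W z))
        (fun z => (1 / (e + 1)) ^ p * (z.1 ^ (p - 1) * z.2 ^ (-α))) Ω := fun z hz => by
      have hx := hz.1.1
      dsimp only [f]
      rw [hW z hz, abs_of_nonneg (by positivity),
        Real.mul_rpow (by positivity) (Real.rpow_nonneg hx.le _), mul_assoc,
        ← mul_assoc ((z.1 ^ (e + 1)) ^ p), rpow_rpow_mul_rpow_neg hx, add_mul, one_mul, hep]
      ring_nf
    refine IntegrableOn.congr_fun ?_ hv.symm hΩ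
    exact (integrableOn_unitSquare_rpow_mul_rpow_iff.2 ⟨by linarith, by linarith⟩).const_mul _
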